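/- arXiv:2301.08694 — 9 statements merged into one kernel-verified Lean document; each statement's English description precedes it below -/
import Mathlib

section
/- Let {𝔄_n} be a sequence of sub-σ-algebras of 𝔄 on a probability space, and B ∈ 𝔄. If for every r > 0 there exist a sequence of sets A_n^r ∈ 𝔄_n and N_r ∈ ℕ such that μ(⋃_{n>N_r} (A_n^r △ B)) < r, then there exists a sequence A_n ∈ 𝔄_n with lim_{N→∞} μ(⋃_{n>N} (A_n △ B)) = 0 (equivalently, χ_{A_n} → χ_B almost everywhere). -/
open MeasureTheory Filter Set Topology
open scoped ENNReal symmDiff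

noncomputable section

def indR {X : Type*} (A : Set X) : X → ℝ := A.indicator fun _ => (1 : ℝ)

theorem stmt1 {X : Type*} [mX : MeasurableSpace X] (μ : Measure X) [IsProbabilityMeasure μ]
    (𝔄 : ℕ → MeasurableSpace X) (h𝔄 : ∀ n, 𝔄 n ≤ mX)
    (B : Set X) (hB : MeasurableSet B)
    (h : ∀ r : ℝ≥0∞, 0 < r → ∃ (As : ℕ → Set X) (N : ℕ),
      (∀ n, MeasurableSet[𝔄 n] (As n)) ∧ μ (⋃ n > N, As n ∆ B) < r) :
    ∃ As : ℕ → Set X, (∀ n, MeasurableSet[𝔄 n] (As n)) ∧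
      Tendsto (fun N => μ (⋃ n > N, As n ∆ B)) atTop (𝓝 0) ∧
      (∀ᵐ x ∂μ, Tendsto (fun n => indR (As n) x) atTop (𝓝 (indR B x))) := by
  -- choose approximating sequences with error `2⁻¹ ^ k`
  have hpos : ∀ k : ℕ, (0 : ℝ≥0∞) < 2⁻¹ ^ k := fun k =>
    ENNReal.pow_pos (ENNReal.inv_pos.mpr ENNReal.ofNat_ne_top) k
  choose As N hmeas hsmall using fun k : ℕ => h (2⁻¹ ^ k) (hpos k)
  -- a strictly increasing sequence of cutoffs
  let M : ℕ → ℕ := fun k => (Finset.range (k + 1)).sup N + k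
  have hMN : ∀ k, N k ≤ M k := fun k =>
    le_trans (Finset.le_sup (Finset.self_mem_range_succ k)) (Nat.le_add_right _ _)
  have hMmono : ∀ k, M k < M (k + 1) := fun k =>
    Nat.add_lt_add_of_le_of_lt
      (Finset.sup_mono (Finset.range_subset_range.mpr (Nat.le_succ _)))
      (Nat.lt_succ_self _)
  have hMk : ∀ k, k ≤ M k := fun k => Nat.le_add_left _ _
  -- the diagonal index
  classical
  let K : ℕ → ℕ := fun n => Nat.findGreatest (fun k => M k < n) n
  let A : ℕ → Set X := fun n => As (K n) n
  have hAmeas : ∀ n, MeasurableSet[𝔄 n] (A n) := fun n => hmeas (K n) n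
  -- tail unions of the chosen sequences
  set U : ℕ → Set X := fun j => ⋃ n > N j, As j n ∆ B with hU
  have hUle : ∀ j, μ (U j) ≤ 2⁻¹ ^ j := fun j => (hsmall j).le
  -- key inclusion
  have hsub : ∀ k NN, M k ≤ NN → (⋃ n > NN, A n ∆ B) ⊆ ⋃ i, U (k + i) := by
    intro k NN hkN x hx
    simp only [mem_iUnion] at hx ⊢
    obtain ⟨n, hn, hxn⟩ := hx
    have hkn : k ≤ n := le_trans (le_trans (hMk k) hkN) hn.le
    have hMkn : M k < n := lt_of_le_of_lt hkN hn
    have hKk : k ≤ K n := Nat.le_findGreatest (P := fun k => M k < n) hkn hMkn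
    have hMK : M (K n) < n := Nat.findGreatest_spec (P := fun k => M k < n) hkn hMkn
    have hNK : N (K n) < n := lt_of_le_of_lt (hMN _) hMK
    refine ⟨K n - k, ?_⟩
    rw [Nat.add_sub_cancel' hKk]
    simp only [U, mem_iUnion]
    exact ⟨n, hNK, hxn⟩
  -- measure bound for the tail union
  have hbound : ∀ k, μ (⋃ i, U (k + i)) ≤ 2 * 2⁻¹ ^ k := by
    intro k
    calc μ (⋃ i, U (k + i)) ≤ ∑' i, μ (U (k + i)) := measure_iUnion_le _
      _ ≤ ∑' i : ℕ, 2⁻¹ ^ (k + i) := ENNReal.tsum_le_tsum fun i => hUle (k + i)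
      _ = 2⁻¹ ^ k * ∑' i : ℕ, 2⁻¹ ^ i := by
          simp_rw [pow_add]; rw [ENNReal.tsum_mul_left]
      _ = 2⁻¹ ^ k * 2 := by
          rw [ENNReal.tsum_geometric, ENNReal.one_sub_inv_two, inv_inv]
      _ = 2 * 2⁻¹ ^ k := mul_comm _ _
  -- the tendsto statement
  have htend : Tendsto (fun NN => μ (⋃ n > NN, A n ∆ B)) atTop (𝓝 0) := by
    rw [ENNReal.tendsto_atTop_zero]
    intro ε hε
    have h2 : Tendsto (fun k : ℕ => (2 : ℝ≥0∞) * 2⁻¹ ^ k) atTop (𝓝 0) := by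
      have := ENNReal.tendsto_pow_atTop_nhds_zero_of_lt_one
        (by simp [ENNReal.inv_lt_one] : (2⁻¹ : ℝ≥0∞) < 1)
      simpa using ENNReal.Tendsto.const_mul this (Or.inr (by norm_num))
    obtain ⟨k, hk⟩ := (h2.eventually (eventually_le_nhds hε)).exists
    refine ⟨M k, fun NN hNN => ?_⟩
    exact le_trans (le_trans (measure_mono (hsub k NN hNN)) (hbound k)) hk
  refine ⟨A, hAmeas, htend, ?_⟩
  -- a.e. convergence
  set L : Set X := ⋂ NN, ⋃ n > NN, A n ∆ B with hL
  have hLnull : μ L = 0 := by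
    have hle : ∀ NN, μ L ≤ μ (⋃ n > NN, A n ∆ B) := fun NN =>
      measure_mono (iInter_subset _ NN)
    have : μ L ≤ 0 := le_of_tendsto_of_tendsto' tendsto_const_nhds htend hle
    exact le_antisymm this zero_le
  refine measure_mono_null (fun x hx => ?_) hLnull
  simp only [mem_setOf_eq] at hx
  by_contra hxL
  apply hx
  simp only [hL, mem_iInter, mem_iUnion] at hxL
  push_neg at hxL
  obtain ⟨NN, hNN⟩ := hxL
  have heq : ∀ n > NN, indR (A n) x = indR B x := by
    intro n hn
    have := hNN n hn
    simp only [Set.mem_symmDiff, not_or, not_and, not_not] at this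
    unfold indR
    by_cases hxB : x ∈ B
    · rw [Set.indicator_of_mem hxB, Set.indicator_of_mem (this.2 hxB)]
    · rw [Set.indicator_of_notMem hxB, Set.indicator_of_notMem
        (fun hxA => hxB (this.1 hxA))]
  exact Tendsto.congr' (eventually_atTop.mpr ⟨NN + 1, fun n hn => (heq n hn).symm⟩)
    tendsto_const_nhds
end
end

section
/- Let {𝔄_n} be a sequence of sub-σ-algebras of 𝔄. Define ℱ = {A ∈ 𝔄 : there exists a sequence A_n ∈ 𝔄_n with A = ⋃_{N=1}^∞ ⋂_{n>N} A_n = ⋂_{N=1}^∞ ⋃_{n>N} A_n up to sets of measure zero}. Then ℱ is a σ-algebra. -/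
open MeasureTheory Filter Set Topology
open scoped ENNReal symmDiff

noncomputable section

def Fam {X : Type*} [mX : MeasurableSpace X] (μ : Measure X)
    (𝔄 : ℕ → MeasurableSpace X) : Set (Set X) :=
  {A | MeasurableSet A ∧ ∃ As : ℕ → Set X, (∀ n, MeasurableSet[𝔄 n] (As n)) ∧
    μ (A ∆ ⋃ N, ⋂ n > N, As n) = 0 ∧ μ (A ∆ ⋂ N, ⋃ n > N, As n) = 0}

section Aux

variable {X : Type*}

lemma aux_symm_union (A : Set X) (As : ℕ → Set X) :
    (A ∆ ⋃ N, ⋂ n > N, As n) ∪ (A ∆ ⋂ N, ⋃ n > N, As n)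
      = ⋂ N, ⋃ n > N, (As n ∆ A) := by
  ext x
  simp only [Set.mem_union, Set.mem_symmDiff, Set.mem_iUnion, Set.mem_iInter, exists_prop]
  by_cases hx : x ∈ A
  · simp only [hx, not_true, and_false, false_and, and_true, true_and, or_false, false_or,
      not_exists, not_forall]
    push_neg
    constructor
    · rintro (h | ⟨N0, hN0⟩) N
      · obtain ⟨n, hn, hns⟩ := h N
        exact ⟨n, hn, hns⟩
      · exact ⟨max N N0 + 1, by omega, hN0 _ (by omega)⟩
    · intro h
      left
      intro N
      obtain ⟨n, hn, hns⟩ := h N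
      exact ⟨n, hn, hns⟩
  · simp only [hx, not_false_iff, and_true, true_and, false_and, and_false, or_false, false_or,
      not_exists, not_forall]
    constructor
    · rintro (⟨N0, hN0⟩ | h) N
      · exact ⟨max N N0 + 1, by omega, hN0 _ (by omega)⟩
      · obtain ⟨n, hn, hns⟩ := h N
        exact ⟨n, hn, hns⟩
    · exact fun h => Or.inr h

lemma aux_freq_eq (As : ℕ → Set X) :
    (⋂ N, ⋃ n > N, As n) = {x | ∃ᶠ n in atTop, x ∈ As n} := by
  ext x
  simp only [Set.mem_iInter, Set.mem_iUnion, exists_prop, Set.mem_setOf_eq,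
    Filter.frequently_atTop']

lemma aux_null_iff [mX : MeasurableSpace X] (μ : Measure X) (As : ℕ → Set X) :
    μ (⋂ N, ⋃ n > N, As n) = 0 ↔ ∀ᵐ x ∂μ, ∀ᶠ n in atTop, x ∉ As n := by
  rw [aux_freq_eq, measure_eq_zero_iff_ae_notMem]
  refine eventually_congr (Eventually.of_forall fun x => ?_)
  simp only [Set.mem_setOf_eq, Filter.not_frequently]

lemma mem_Fam_iff [mX : MeasurableSpace X] (μ : Measure X) (𝔄 : ℕ → MeasurableSpace X)
    (A : Set X) :
    A ∈ Fam μ 𝔄 ↔ MeasurableSet A ∧ ∃ As : ℕ → Set X, (∀ n, MeasurableSet[𝔄 n] (As n)) ∧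
      ∀ᵐ x ∂μ, ∀ᶠ n in atTop, (x ∈ As n ↔ x ∈ A) := by
  unfold Fam
  simp only [Set.mem_setOf_eq]
  refine and_congr_right fun _ => exists_congr fun As => and_congr_right fun _ => ?_
  rw [← measure_union_null_iff, aux_symm_union, aux_null_iff]
  refine eventually_congr (Eventually.of_forall fun x =>
    eventually_congr (Eventually.of_forall fun n => ?_))
  simp only [Set.mem_symmDiff]
  tauto

end Aux

theorem stmt2 {X : Type*} [mX : MeasurableSpace X] (μ : Measure X) [IsProbabilityMeasure μ]
    (𝔄 : ℕ → MeasurableSpace X) (h𝔄 : ∀ n, 𝔄 n ≤ mX) :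
    ∃ m : MeasurableSpace X, ∀ s : Set X, MeasurableSet[m] s ↔ s ∈ @Fam X mX μ 𝔄 := by
  classical
  refine ⟨{ MeasurableSet' := fun s => s ∈ Fam μ 𝔄
            measurableSet_empty := ?_
            measurableSet_compl := ?_
            measurableSet_iUnion := ?_ }, fun s => Iff.rfl⟩
  · show (∅ : Set X) ∈ Fam μ 𝔄
    rw [mem_Fam_iff]
    exact ⟨MeasurableSet.empty, fun _ => ∅, fun n => @MeasurableSet.empty X (𝔄 n),
      Eventually.of_forall fun x => Eventually.of_forall fun n => by simp⟩
  · intro s hs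
    show sᶜ ∈ Fam μ 𝔄
    replace hs : s ∈ Fam μ 𝔄 := hs
    rw [mem_Fam_iff] at hs ⊢
    obtain ⟨hA, As, hm, hae⟩ := hs
    refine ⟨hA.compl, fun n => (As n)ᶜ, fun n => (hm n).compl, ?_⟩
    refine hae.mono fun x hx => hx.mono fun n h => ?_
    simp only [Set.mem_compl_iff]
    exact not_congr h
  · intro f hf
    have hf' := fun i => (mem_Fam_iff μ 𝔄 (f i)).mp (hf i)
    show (⋃ i, f i) ∈ Fam μ 𝔄
    choose hmeasf As hmeasAs hae using hf'
    rw [mem_Fam_iff]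
    refine ⟨MeasurableSet.iUnion hmeasf, ?_⟩
    set A := ⋃ i, f i with hA
    have hae' : ∀ᵐ x ∂μ, ∀ i, ∀ᶠ n in atTop, (x ∈ As i n ↔ x ∈ f i) := ae_all_iff.mpr hae
    set U : ℕ → Set X := fun k => ⋃ i ∈ Finset.range k, f i with hU
    set B : ℕ → ℕ → Set X := fun k n => ⋃ i ∈ Finset.range k, As i n with hB
    have haeU : ∀ᵐ x ∂μ, ∀ k, ∀ᶠ n in atTop, (x ∈ B k n ↔ x ∈ U k) := by
      refine hae'.mono fun x hx k => ?_
      have h1 : ∀ᶠ n in atTop, ∀ i ∈ Finset.range k, (x ∈ As i n ↔ x ∈ f i) :=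
        (Filter.eventually_all_finset (Finset.range k)).2 fun i _ => hx i
      refine h1.mono fun n hn => ?_
      simp only [hB, hU, Set.mem_iUnion, exists_prop]
      exact exists_congr fun i => and_congr_right fun hi => hn i hi
    set E : ℕ → ℕ → Set X := fun k N => ⋃ n > N, (B k n ∆ U k) with hE
    have hmeasB : ∀ k n, MeasurableSet (B k n) := fun k n =>
      (Finset.range k).measurableSet_biUnion fun i _ => h𝔄 n _ (hmeasAs i n)
    have hmeasU : ∀ k, MeasurableSet (U k) := fun k =>
      (Finset.range k).measurableSet_biUnion fun i _ => hmeasf i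
    have hmeasE : ∀ k N, MeasurableSet (E k N) := fun k N =>
      MeasurableSet.biUnion (Set.to_countable _) fun n _ => (hmeasB k n).symmDiff (hmeasU k)
    have hEnull : ∀ k, μ (⋂ N, E k N) = 0 := by
      intro k
      rw [show (⋂ N, E k N) = ⋂ N, ⋃ n > N, (B k n ∆ U k) from rfl, aux_null_iff]
      refine haeU.mono fun x hx => (hx k).mono fun n hn => ?_
      simp only [Set.mem_symmDiff]
      tauto
    have hNex : ∀ k, ∃ N, μ (E k N) < (2⁻¹ : ℝ≥0∞) ^ k := by
      intro k
      have hanti : Antitone (E k) := by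
        intro N M hNM x hxm
        simp only [hE, Set.mem_iUnion, exists_prop] at hxm ⊢
        obtain ⟨n, hn, hxn⟩ := hxm
        exact ⟨n, lt_of_le_of_lt hNM hn, hxn⟩
      have htend := tendsto_measure_iInter_atTop (μ := μ)
        (fun N => (hmeasE k N).nullMeasurableSet) hanti ⟨0, measure_ne_top μ _⟩
      rw [hEnull k] at htend
      have hpos : (0 : ℝ≥0∞) < 2⁻¹ ^ k := ENNReal.pow_pos (by norm_num) k
      exact (htend.eventually_lt_const hpos).exists
    choose N hN using hNex
    set K : ℕ → ℕ := fun n => Nat.findGreatest (fun k => N k < n) n with hK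
    refine ⟨fun n => B (K n) n, fun n => ?_, ?_⟩
    · exact (Finset.range (K n)).measurableSet_biUnion (m := 𝔄 n)
        fun i _ => hmeasAs i n
    · -- Borel–Cantelli
      have hsum : (∑' k, μ (E k (N k))) ≠ ∞ := by
        have hle : (∑' k, μ (E k (N k))) ≤ ∑' k, (2⁻¹ : ℝ≥0∞) ^ k :=
          ENNReal.tsum_le_tsum fun k => (hN k).le
        rw [ENNReal.tsum_geometric] at hle
        exact ne_top_of_le_ne_top (by norm_num) hle
      have hBC : μ {x | ∃ᶠ k in atTop, x ∈ E k (N k)} = 0 := by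
        apply measure_setOf_frequently_eq_zero
        simpa using hsum
      have hG : ∀ᵐ x ∂μ, ∀ᶠ k in atTop, x ∉ E k (N k) := by
        have := measure_eq_zero_iff_ae_notMem.mp hBC
        exact this.mono fun x hx => Filter.not_frequently.mp hx
      filter_upwards [hG] with x hx
      obtain ⟨k₀, hk₀⟩ := Filter.eventually_atTop.mp hx
      by_cases hxA : x ∈ A
      · obtain ⟨i, hi⟩ := Set.mem_iUnion.mp hxA
        set k₁ := max k₀ (i + 1) with hk₁
        have h1 : ∀ᶠ n in atTop, k₁ ≤ K n := by
          refine Filter.eventually_atTop.mpr ⟨max (N k₁ + 1) k₁, fun n hn => ?_⟩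
          exact Nat.le_findGreatest (le_trans (le_max_right _ _) hn) (by omega)
        have h2 : ∀ᶠ n in atTop, N (K n) < n := by
          refine Filter.eventually_atTop.mpr ⟨N 0 + 1, fun n hn => ?_⟩
          exact Nat.findGreatest_spec (P := fun k => N k < n) (Nat.zero_le n)
            (show N 0 < n by omega)
        filter_upwards [h1, h2] with n hn1 hn2
        have hxE : x ∉ E (K n) (N (K n)) := hk₀ (K n) (le_trans (le_max_left _ _) hn1)
        have hnd : x ∉ B (K n) n ∆ U (K n) := fun hmem =>
          hxE (Set.mem_biUnion hn2 hmem)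
        have hxU : x ∈ U (K n) := by
          refine Set.mem_biUnion (Finset.mem_range.mpr ?_) hi
          omega
        simp only [Set.mem_symmDiff] at hnd
        constructor
        · intro _; exact hxA
        · intro _
          by_contra hxB
          exact hnd (Or.inr ⟨hxU, hxB⟩)
      · have h2 : ∀ᶠ n in atTop, N (K n) < n := by
          refine Filter.eventually_atTop.mpr ⟨max (N 0 + 1) k₀, fun n hn => ?_⟩
          exact Nat.findGreatest_spec (P := fun k => N k < n) (Nat.zero_le n)
            (show N 0 < n by omega)
        have h1 : ∀ᶠ n in atTop, k₀ ≤ K n := by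
          refine Filter.eventually_atTop.mpr ⟨max (N k₀ + 1) k₀, fun n hn => ?_⟩
          exact Nat.le_findGreatest (le_trans (le_max_right _ _) hn) (by omega)
        filter_upwards [h1, h2] with n hn1 hn2
        have hxE : x ∉ E (K n) (N (K n)) := hk₀ (K n) hn1
        have hnd : x ∉ B (K n) n ∆ U (K n) := fun hmem =>
          hxE (Set.mem_biUnion hn2 hmem)
        have hxU : x ∉ U (K n) := by
          intro hmem
          obtain ⟨j, _, hj⟩ := Set.mem_iUnion₂.mp hmem
          exact hxA (Set.mem_iUnion.mpr ⟨j, hj⟩)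
        simp only [Set.mem_symmDiff] at hnd
        constructor
        · intro hxB
          exact absurd (Or.inl ⟨hxB, hxU⟩) hnd
        · intro h; exact absurd h hxA
end
end

section
/- Let {𝔄_n} be a sequence of sub-σ-algebras, ℱ = {A ∈ 𝔄 : ∃ A_n ∈ 𝔄_n with χ_{A_n} → χ_A a.e.}, and 𝔄_μ = {A ∈ 𝔄 : ∃ A_n ∈ 𝔄_n with μ(A_n △ A) → 0}. Then ⋁_{N=1}^∞ ⋂_{n≥N} 𝔄_n ⊆ ℱ ⊆ 𝔄_μ. -/
open MeasureTheory Filter Set Topology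
open scoped ENNReal symmDiff

noncomputable section

def FamAE {X : Type*} [mX : MeasurableSpace X] (μ : Measure X)
    (𝔄 : ℕ → MeasurableSpace X) : Set (Set X) :=
  {A | MeasurableSet A ∧ ∃ As : ℕ → Set X, (∀ n, MeasurableSet[𝔄 n] (As n)) ∧
    ∀ᵐ x ∂μ, Tendsto (fun n => indR (As n) x) atTop (𝓝 (indR A x))}

def Amu {X : Type*} [mX : MeasurableSpace X] (μ : Measure X)
    (𝔄 : ℕ → MeasurableSpace X) : Set (Set X) :=
  {A | MeasurableSet A ∧ ∃ As : ℕ → Set X, (∀ n, MeasurableSet[𝔄 n] (As n)) ∧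
    Tendsto (fun n => μ (As n ∆ A)) atTop (𝓝 0)}

lemma tendsto_indR_iff {X : Type*} {As : ℕ → Set X} {A : Set X} {x : X} :
    Tendsto (fun n => indR (As n) x) atTop (𝓝 (indR A x)) ↔
      ∀ᶠ n in atTop, (x ∈ As n ↔ x ∈ A) := by
  classical
  constructor
  · intro h
    by_cases hx : x ∈ A
    · have h1 : indR A x = 1 := by simp [indR, hx]
      rw [h1] at h
      have hev := h.eventually (eventually_gt_nhds (by norm_num : (1:ℝ)/2 < 1))
      filter_upwards [hev] with n hn
      by_cases hxn : x ∈ As n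
      · simp [hxn, hx]
      · simp [indR, hxn] at hn; norm_num at hn
    · have h1 : indR A x = 0 := by simp [indR, hx]
      rw [h1] at h
      have hev := h.eventually (eventually_lt_nhds (by norm_num : (0:ℝ) < 1/2))
      filter_upwards [hev] with n hn
      by_cases hxn : x ∈ As n
      · simp [indR, hxn] at hn; norm_num at hn
      · simp [hxn, hx]
  · intro h
    refine tendsto_const_nhds.congr' ?_
    filter_upwards [h] with n hn
    simp only [indR, Set.indicator_apply]
    exact if_congr hn.symm rfl rfl

lemma famae_empty {X : Type*} [mX : MeasurableSpace X] (μ : Measure X)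
    (𝔄 : ℕ → MeasurableSpace X) : (∅ : Set X) ∈ FamAE μ 𝔄 :=
  ⟨MeasurableSet.empty, fun _ => ∅, fun n => @MeasurableSet.empty X (𝔄 n),
    ae_of_all _ fun _ => tendsto_const_nhds⟩

lemma famae_compl {X : Type*} [mX : MeasurableSpace X] {μ : Measure X}
    {𝔄 : ℕ → MeasurableSpace X} {A : Set X} (h : A ∈ FamAE μ 𝔄) : Aᶜ ∈ FamAE μ 𝔄 := by
  obtain ⟨hm, As, h1, h2⟩ := h
  refine ⟨hm.compl, fun n => (As n)ᶜ, fun n => (h1 n).compl, ?_⟩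
  filter_upwards [h2] with x hx
  rw [tendsto_indR_iff]
  filter_upwards [tendsto_indR_iff.mp hx] with n hn
  simp [hn]

lemma famae_union {X : Type*} [mX : MeasurableSpace X] {μ : Measure X}
    {𝔄 : ℕ → MeasurableSpace X} {A B : Set X} (hA : A ∈ FamAE μ 𝔄) (hB : B ∈ FamAE μ 𝔄) :
    A ∪ B ∈ FamAE μ 𝔄 := by
  obtain ⟨hAm, As, hAsm, hAs⟩ := hA
  obtain ⟨hBm, Bs, hBsm, hBs⟩ := hB
  refine ⟨hAm.union hBm, fun n => As n ∪ Bs n, fun n => (hAsm n).union (hBsm n), ?_⟩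
  filter_upwards [hAs, hBs] with x hx1 hx2
  rw [tendsto_indR_iff]
  filter_upwards [tendsto_indR_iff.mp hx1, tendsto_indR_iff.mp hx2] with n h1 h2
  simp [Set.mem_union, h1, h2]

lemma famae_iUnion {X : Type*} [mX : MeasurableSpace X] {μ : Measure X}
    [IsFiniteMeasure μ] {𝔄 : ℕ → MeasurableSpace X} (h𝔄 : ∀ n, 𝔄 n ≤ mX)
    (f : ℕ → Set X) (hf : ∀ i, f i ∈ FamAE μ 𝔄) : (⋃ i, f i) ∈ FamAE μ 𝔄 := by
  classical
  set B : ℕ → Set X := fun k => ⋃ i ∈ Finset.range (k + 1), f i with hBdef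
  have hB : ∀ k, B k ∈ FamAE μ 𝔄 := by
    intro k
    induction k with
    | zero => simpa [hBdef] using hf 0
    | succ k ih =>
      have hstep : B (k + 1) = f (k + 1) ∪ B k := by
        ext x
        simp only [hBdef, Set.mem_iUnion, Finset.mem_range, Set.mem_union, exists_prop]
        constructor
        · rintro ⟨i, hi, hx⟩
          rcases Nat.lt_succ_iff_lt_or_eq.mp hi with h | h
          · exact Or.inr ⟨i, h, hx⟩
          · exact Or.inl (h ▸ hx)
        · rintro (hx | ⟨i, hi, hx⟩)
          · exact ⟨k + 1, Nat.lt_succ_self _, hx⟩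
          · exact ⟨i, Nat.lt_succ_of_lt hi, hx⟩
      rw [hstep]
      exact famae_union (hf (k + 1)) ih
  have hBm : ∀ k, MeasurableSet (B k) := fun k => (hB k).1
  choose Cs hCsmeas hCsae using fun k => (hB k).2
  -- measurability of the symmetric differences in the ambient σ-algebra
  have hSm : ∀ k n, MeasurableSet (Cs k n ∆ B k) :=
    fun k n => MeasurableSet.symmDiff (h𝔄 n _ (hCsmeas k n)) (hBm k)
  set D : ℕ → ℕ → Set X := fun k N => ⋃ n ∈ Set.Ici N, Cs k n ∆ B k with hDdef
  have hDanti : ∀ k, Antitone (D k) := by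
    intro k N N' h
    exact Set.biUnion_subset_biUnion_left (Set.Ici_subset_Ici.mpr h)
  have hDm : ∀ k N, MeasurableSet (D k N) :=
    fun k N => MeasurableSet.biUnion (Set.to_countable _) fun n _ => hSm k n
  have hDnull : ∀ k, μ (⋂ N, D k N) = 0 := by
    intro k
    have hae : ∀ᵐ x ∂μ, ∀ᶠ n in atTop, x ∉ Cs k n ∆ B k := by
      filter_upwards [hCsae k] with x hx
      filter_upwards [tendsto_indR_iff.mp hx] with n hn
      rw [Set.mem_symmDiff]
      tauto
    refine measure_mono_null ?_ (ae_iff.mp hae)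
    intro x hx
    simp only [Set.mem_setOf_eq]
    intro hcon
    obtain ⟨N, hN⟩ := eventually_atTop.mp hcon
    have hxN := Set.mem_iInter.mp hx N
    obtain ⟨m, hm, hmem⟩ :
        ∃ m, N ≤ m ∧ x ∈ Cs k m ∆ B k := by
      simpa only [hDdef, Set.mem_iUnion, Set.mem_Ici, exists_prop] using hxN
    exact hN m hm hmem
  have htend : ∀ k, Tendsto (fun N => μ (D k N)) atTop (𝓝 0) := by
    intro k
    have h := tendsto_measure_iInter_atTop (fun N => (hDm k N).nullMeasurableSet)
      (hDanti k) ⟨0, measure_ne_top μ _⟩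
    rw [hDnull k] at h
    exact h
  have hexists : ∀ k, ∃ N, μ (D k N) ≤ (2 : ℝ≥0∞)⁻¹ ^ k := by
    intro k
    have hpos : (0 : ℝ≥0∞) < 2⁻¹ ^ k := ENNReal.pow_pos (by norm_num) k
    obtain ⟨N, hN⟩ := ((htend k).eventually_lt_const hpos).exists
    exact ⟨N, hN.le⟩
  choose N0 hN0 using hexists
  set nk : ℕ → ℕ := fun k => Nat.rec (N0 0) (fun k ih => max (ih + 1) (N0 (k + 1))) k with hnkdef
  have hnk_strict : StrictMono nk :=
    strictMono_nat_of_lt_succ fun k =>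
      lt_of_lt_of_le (Nat.lt_succ_self _) (le_max_left _ _)
  have hnk_ge : ∀ k, N0 k ≤ nk k := by
    intro k
    cases k with
    | zero => exact le_rfl
    | succ k => exact le_max_right _ _
  have hE : ∀ k, μ (D k (nk k)) ≤ (2 : ℝ≥0∞)⁻¹ ^ k :=
    fun k => le_trans (measure_mono (hDanti k (hnk_ge k))) (hN0 k)
  have hsum : (∑' k, μ (D k (nk k))) ≠ ∞ := by
    have hle : (∑' k, μ (D k (nk k))) ≤ ∑' k : ℕ, (2 : ℝ≥0∞)⁻¹ ^ k :=
      ENNReal.tsum_le_tsum hE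
    refine ne_top_of_le_ne_top ?_ hle
    rw [ENNReal.tsum_geometric]
    simp [ENNReal.one_sub_inv_two]
  have hBC : ∀ᵐ x ∂μ, ∀ᶠ k in atTop, x ∉ D k (nk k) := ae_eventually_notMem hsum
  set kn : ℕ → ℕ := fun n => Nat.findGreatest (fun k => nk k ≤ n) n with hkndef
  have hkn_spec : ∀ n, nk 0 ≤ n → nk (kn n) ≤ n := fun n h =>
    Nat.findGreatest_spec (P := fun k => nk k ≤ n) (Nat.zero_le n) h
  have hkn_tendsto : Tendsto kn atTop atTop := by
    rw [Filter.tendsto_atTop]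
    intro K
    filter_upwards [eventually_ge_atTop (nk K)] with n hn
    exact Nat.le_findGreatest (le_trans hnk_strict.le_apply hn) hn
  -- pointwise convergence of the finite unions to the full union
  have hBsub : ∀ k, B k ⊆ ⋃ i, f i := fun k =>
    Set.iUnion₂_subset fun i _ => Set.subset_iUnion f i
  have hptB : ∀ x : X, ∀ᶠ k in atTop, (x ∈ B k ↔ x ∈ ⋃ i, f i) := by
    intro x
    by_cases hx : x ∈ ⋃ i, f i
    · obtain ⟨i, hi⟩ := Set.mem_iUnion.mp hx
      filter_upwards [eventually_ge_atTop i] with k hk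
      simp only [hx, iff_true]
      exact Set.mem_biUnion (Finset.mem_range.mpr (Nat.lt_succ_of_le hk)) hi
    · refine Eventually.of_forall fun k => ?_
      simp only [hx, iff_false]
      exact fun hxB => hx (hBsub k hxB)
  refine ⟨MeasurableSet.iUnion fun i => (hf i).1, fun n => Cs (kn n) n,
    fun n => hCsmeas (kn n) n, ?_⟩
  filter_upwards [hBC] with x hx
  rw [tendsto_indR_iff]
  obtain ⟨K0, hK0⟩ := eventually_atTop.mp hx
  obtain ⟨K1, hK1⟩ := eventually_atTop.mp (hptB x)
  have hev : ∀ᶠ n in atTop, max K0 K1 ≤ kn n ∧ nk 0 ≤ n :=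
    (hkn_tendsto.eventually (eventually_ge_atTop (max K0 K1))).and
      (eventually_ge_atTop (nk 0))
  filter_upwards [hev] with n hn
  obtain ⟨hn1, hn2⟩ := hn
  have h1 : x ∉ Cs (kn n) n ∆ B (kn n) := by
    have hxE : x ∉ D (kn n) (nk (kn n)) := hK0 _ (le_trans (le_max_left _ _) hn1)
    intro hmem
    exact hxE (Set.mem_biUnion (hkn_spec n hn2) hmem)
  have h2 : (x ∈ B (kn n) ↔ x ∈ ⋃ i, f i) := hK1 _ (le_trans (le_max_right _ _) hn1)
  have h3 : (x ∈ Cs (kn n) n ↔ x ∈ B (kn n)) := by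
    by_contra hc
    apply h1
    rw [Set.mem_symmDiff]
    tauto
  exact h3.trans h2

def famaeMS {X : Type*} [mX : MeasurableSpace X] (μ : Measure X) [IsFiniteMeasure μ]
    (𝔄 : ℕ → MeasurableSpace X) (h𝔄 : ∀ n, 𝔄 n ≤ mX) : MeasurableSpace X where
  MeasurableSet' s := s ∈ FamAE μ 𝔄
  measurableSet_empty := famae_empty μ 𝔄
  measurableSet_compl _ hs := famae_compl hs
  measurableSet_iUnion f hf := famae_iUnion h𝔄 f hf

theorem stmt3 {X : Type*} [mX : MeasurableSpace X] (μ : Measure X) [IsProbabilityMeasure μ]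
    (𝔄 : ℕ → MeasurableSpace X) (h𝔄 : ∀ n, 𝔄 n ≤ mX) (A : Set X) :
    (MeasurableSet[⨆ N : ℕ, ⨅ (n : ℕ) (_ : N ≤ n), 𝔄 n] A → A ∈ FamAE μ 𝔄) ∧
    (A ∈ FamAE μ 𝔄 → A ∈ Amu μ 𝔄) := by
  constructor
  · intro hA
    classical
    have hle : (⨆ N : ℕ, ⨅ (n : ℕ) (_ : N ≤ n), 𝔄 n) ≤ famaeMS μ 𝔄 h𝔄 := by
      refine iSup_le fun N => ?_
      intro s hs
      show s ∈ FamAE μ 𝔄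
      rw [MeasurableSpace.measurableSet_iInf] at hs
      have hs' : ∀ n, N ≤ n → MeasurableSet[𝔄 n] s := fun n hn =>
        MeasurableSpace.measurableSet_iInf.mp (hs n) hn
      refine ⟨h𝔄 N _ (hs' N le_rfl), fun n => if h : N ≤ n then s else ∅, fun n => ?_, ?_⟩
      · dsimp only
        split_ifs with h
        · exact hs' n h
        · exact @MeasurableSet.empty _ (𝔄 n)
      · refine ae_of_all _ fun x => tendsto_indR_iff.mpr ?_
        filter_upwards [eventually_ge_atTop N] with n hn
        simp [hn]
    exact hle A hA
  · rintro ⟨hAm, As, hAsm, hAs⟩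
    refine ⟨hAm, As, hAsm, ?_⟩
    have hSm : ∀ n, MeasurableSet (As n ∆ A) :=
      fun n => MeasurableSet.symmDiff (h𝔄 n _ (hAsm n)) hAm
    have key : Tendsto (fun n => ∫⁻ x, (As n ∆ A).indicator (fun _ => (1 : ℝ≥0∞)) x ∂μ)
        atTop (𝓝 (∫⁻ _x, (0 : ℝ≥0∞) ∂μ)) := by
      refine tendsto_lintegral_of_dominated_convergence (fun _ => 1)
        (fun n => measurable_const.indicator (hSm n)) (fun n => ae_of_all _ fun x => ?_)
        (by simp) ?_
      · exact Set.indicator_le_self' (fun _ _ => zero_le_one) x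
      · filter_upwards [hAs] with x hx
        have hev : ∀ᶠ n in atTop, x ∉ As n ∆ A := by
          filter_upwards [tendsto_indR_iff.mp hx] with n hn
          rw [Set.mem_symmDiff]
          tauto
        refine tendsto_const_nhds.congr' ?_
        filter_upwards [hev] with n hn
        simp [Set.indicator_of_notMem hn]
    simp only [lintegral_zero] at key
    refine key.congr fun n => ?_
    rw [lintegral_indicator_const (hSm n), one_mul]
end
end

section
/- Let {𝔄_n} be sub-σ-algebras of 𝔄. If A and B are both uniformly covered by {𝔄_n}, then A ∩ B is uniformly covered by {𝔄_n}. -/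
open MeasureTheory Filter Set Topology
open scoped ENNReal symmDiff

noncomputable section

def UnifCovers {X : Type*} [mX : MeasurableSpace X] (μ : Measure X)
    (𝔄 : ℕ → MeasurableSpace X) (A : Set X) (As : ℕ → Set X) : Prop :=
  (∀ n, MeasurableSet[𝔄 n] (As n)) ∧
  (∀ᵐ x ∂μ, Tendsto (fun n => indR (As n) x) atTop (𝓝 (indR A x))) ∧
  Tendsto (fun n => eLpNorm (μ[indR (A \ As n) | 𝔄 n]) ⊤ μ) atTop (𝓝 0)

def UnifCovered {X : Type*} [mX : MeasurableSpace X] (μ : Measure X)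
    (𝔄 : ℕ → MeasurableSpace X) (A : Set X) : Prop :=
  ∃ As, UnifCovers μ 𝔄 A As

lemma indR_nonneg {X : Type*} (A : Set X) (x : X) : 0 ≤ indR A x := by
  unfold indR; by_cases h : x ∈ A <;> simp [h]

lemma indR_mem {X : Type*} {A : Set X} {x : X} (h : x ∈ A) : indR A x = 1 := by
  simp [indR, h]

lemma indR_not_mem {X : Type*} {A : Set X} {x : X} (h : x ∉ A) : indR A x = 0 := by
  simp [indR, h]

lemma integrable_indR {X : Type*} [mX : MeasurableSpace X] (μ : Measure X)
    [IsProbabilityMeasure μ] {A : Set X} (hA : MeasurableSet A) :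
    Integrable (indR A) μ :=
  (integrable_const (1 : ℝ)).indicator hA

theorem stmt6 {X : Type*} [mX : MeasurableSpace X] (μ : Measure X) [IsProbabilityMeasure μ]
    (𝔄 : ℕ → MeasurableSpace X) (h𝔄 : ∀ n, 𝔄 n ≤ mX)
    (A B : Set X) (hA : MeasurableSet A) (hB : MeasurableSet B)
    (hcA : UnifCovered μ 𝔄 A) (hcB : UnifCovered μ 𝔄 B) :
    UnifCovered μ 𝔄 (A ∩ B) := by
  obtain ⟨As, hAsm, hAsptw, hAsn⟩ := hcA
  obtain ⟨Bs, hBsm, hBsptw, hBsn⟩ := hcB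
  refine ⟨fun n => As n ∩ Bs n, fun n => (hAsm n).inter (hBsm n), ?_, ?_⟩
  · filter_upwards [hAsptw, hBsptw] with x hxA hxB
    have h1 : ∀ (C D : Set X), indR (C ∩ D) x = indR C x * indR D x := by
      intro C D
      by_cases hC : x ∈ C <;> by_cases hD : x ∈ D <;>
        simp [indR, hC, hD, Set.mem_inter_iff]
    simp only [h1]
    exact hxA.mul hxB
  · -- the main estimate
    have key : ∀ n, eLpNorm (μ[indR ((A ∩ B) \ (As n ∩ Bs n)) | 𝔄 n]) ⊤ μ ≤
        eLpNorm (μ[indR (A \ As n) | 𝔄 n]) ⊤ μ + eLpNorm (μ[indR (B \ Bs n) | 𝔄 n]) ⊤ μ := by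
      intro n
      set f := indR ((A ∩ B) \ (As n ∩ Bs n))
      set g := indR (A \ As n)
      set h := indR (B \ Bs n)
      have hfm : MeasurableSet ((A ∩ B) \ (As n ∩ Bs n)) :=
        (hA.inter hB).diff (h𝔄 n _ ((hAsm n).inter (hBsm n)))
      have hgm : MeasurableSet (A \ As n) := hA.diff (h𝔄 n _ (hAsm n))
      have hhm : MeasurableSet (B \ Bs n) := hB.diff (h𝔄 n _ (hBsm n))
      have hfi := integrable_indR μ hfm
      have hgi := integrable_indR μ hgm
      have hhi := integrable_indR μ hhm
      have hle : f ≤ᵐ[μ] g + h := by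
        refine Eventually.of_forall fun x => ?_
        by_cases hx : x ∈ (A ∩ B) \ (As n ∩ Bs n)
        · have : x ∈ (A \ As n) ∪ (B \ Bs n) := by
            rcases hx with ⟨⟨hxA, hxB⟩, hxC⟩
            by_cases hAs : x ∈ As n
            · right; exact ⟨hxB, fun hBs => hxC ⟨hAs, hBs⟩⟩
            · left; exact ⟨hxA, hAs⟩
          have h1 : f x = 1 := indR_mem hx
          rcases this with h2 | h2
          · have := indR_mem h2
            simp only [Pi.add_apply, h1, f, g, h, this]
            have := indR_nonneg (B \ Bs n) x
            linarith
          · have := indR_mem h2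
            simp only [Pi.add_apply, h1, f, g, h, this]
            have := indR_nonneg (A \ As n) x
            linarith
        · have h1 : f x = 0 := indR_not_mem hx
          simp only [Pi.add_apply, h1, f, g, h]
          have := indR_nonneg (A \ As n) x
          have := indR_nonneg (B \ Bs n) x
          linarith
      have hmono : μ[f | 𝔄 n] ≤ᵐ[μ] μ[g | 𝔄 n] + μ[h | 𝔄 n] := by
        have h1 : μ[f | 𝔄 n] ≤ᵐ[μ] μ[g + h | 𝔄 n] :=
          condExp_mono hfi (hgi.add hhi) hle
        have h2 : μ[g + h | 𝔄 n] =ᵐ[μ] μ[g | 𝔄 n] + μ[h | 𝔄 n] :=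
          condExp_add hgi hhi (𝔄 n)
        exact h1.trans h2.le
      have hnn : 0 ≤ᵐ[μ] μ[f | 𝔄 n] :=
        condExp_nonneg (Eventually.of_forall fun x => indR_nonneg _ x)
      have hnorm : ∀ᵐ x ∂μ, ‖(μ[f | 𝔄 n]) x‖ ≤ ‖(μ[g | 𝔄 n] + μ[h | 𝔄 n]) x‖ := by
        filter_upwards [hmono, hnn] with x h1 h2
        rw [Real.norm_of_nonneg h2]
        exact h1.trans (le_abs_self _)
      calc eLpNorm (μ[f | 𝔄 n]) ⊤ μ ≤ eLpNorm (μ[g | 𝔄 n] + μ[h | 𝔄 n]) ⊤ μ :=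
            eLpNorm_mono_ae hnorm
        _ ≤ eLpNorm (μ[g | 𝔄 n]) ⊤ μ + eLpNorm (μ[h | 𝔄 n]) ⊤ μ :=
            eLpNorm_add_le
              (stronglyMeasurable_condExp.mono (h𝔄 n)).aestronglyMeasurable
              (stronglyMeasurable_condExp.mono (h𝔄 n)).aestronglyMeasurable le_top
    have hsum : Tendsto (fun n => eLpNorm (μ[indR (A \ As n) | 𝔄 n]) ⊤ μ +
        eLpNorm (μ[indR (B \ Bs n) | 𝔄 n]) ⊤ μ) atTop (𝓝 0) := by
      have := Tendsto.add hAsn hBsn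
      simpa using this
    exact tendsto_of_tendsto_of_tendsto_of_le_of_le tendsto_const_nhds hsum
      (fun n => zero_le) key
end
end

section
/- Let {𝔄_n} be sub-σ-algebras of 𝔄. If A ∈ 𝔄 is uniformly covered by {𝔄_n}, then limsup_{n→∞} E(χ_A | 𝔄_n)(x) ≤ χ_A(x) for almost every x. -/
open MeasureTheory Filter Set Topology
open scoped ENNReal symmDiff

noncomputable section

theorem stmt8 {X : Type*} [mX : MeasurableSpace X] (μ : Measure X) [IsProbabilityMeasure μ]
    (𝔄 : ℕ → MeasurableSpace X) (h𝔄 : ∀ n, 𝔄 n ≤ mX)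
    (A : Set X) (hA : MeasurableSet A) (hc : UnifCovered μ 𝔄 A) :
    ∀ᵐ x ∂μ, Filter.limsup (fun n => (μ[indR A | 𝔄 n]) x) atTop ≤ indR A x := by
  obtain ⟨As, hAs, hptw, hnorm⟩ := hc
  have hmeasAs : ∀ n, MeasurableSet (As n) := fun n => h𝔄 n _ (hAs n)
  have hint : ∀ (S : Set X), MeasurableSet S → Integrable (indR S) μ := by
    intro S hS
    rw [indR, integrable_indicator_iff hS]
    exact integrableOn_const (measure_ne_top μ S)
  have hdecomp : ∀ n, indR A = indR (A ∩ As n) + indR (A \ As n) := by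
    intro n; funext x
    simp only [indR, Pi.add_apply, Set.indicator_apply]
    by_cases hx : x ∈ A <;> by_cases hx2 : x ∈ As n <;>
      simp [hx, hx2, Set.mem_diff]
  have key : ∀ n, ∀ᵐ x ∂μ,
      (μ[indR A|𝔄 n]) x ≤ indR (As n) x + (μ[indR (A \ As n)|𝔄 n]) x := by
    intro n
    have h1 : μ[indR A|𝔄 n] =ᵐ[μ]
        μ[indR (A ∩ As n)|𝔄 n] + μ[indR (A \ As n)|𝔄 n] := by
      rw [hdecomp n]
      exact condExp_add (hint _ (hA.inter (hmeasAs n))) (hint _ (hA.diff (hmeasAs n))) _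
    have h2 : μ[indR (A ∩ As n)|𝔄 n] ≤ᵐ[μ] μ[indR (As n)|𝔄 n] := by
      apply condExp_mono (hint _ (hA.inter (hmeasAs n))) (hint _ (hmeasAs n))
      apply Eventually.of_forall
      intro x
      simp only [indR, Set.indicator_apply]
      by_cases hx : x ∈ A ∩ As n
      · simp [hx, hx.2]
      · by_cases hx2 : x ∈ As n <;> simp [hx, hx2]
    have h3 : μ[indR (As n)|𝔄 n] = indR (As n) :=
      condExp_of_stronglyMeasurable (h𝔄 n)
        (stronglyMeasurable_const.indicator (hAs n)) (hint _ (hmeasAs n))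
    filter_upwards [h1, h2] with x hx1 hx2
    rw [hx1, Pi.add_apply]
    rw [h3] at hx2
    linarith
  have hbound : ∀ n, ∀ᵐ x ∂μ, (‖(μ[indR (A \ As n)|𝔄 n]) x‖₊ : ℝ≥0∞)
      ≤ eLpNorm (μ[indR (A \ As n)|𝔄 n]) ⊤ μ := by
    intro n
    rw [eLpNorm_exponent_top]
    exact ae_le_eLpNormEssSup
  have hnnA : ∀ n, ∀ᵐ x ∂μ, 0 ≤ (μ[indR A|𝔄 n]) x := fun n =>
    condExp_nonneg (Eventually.of_forall fun x =>
      Set.indicator_nonneg (fun _ _ => zero_le_one) x)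
  filter_upwards [hptw, ae_all_iff.2 key, ae_all_iff.2 hbound, ae_all_iff.2 hnnA]
    with x hx hkey hb hnnx
  have hg0 : Tendsto (fun n => (μ[indR (A \ As n)|𝔄 n]) x) atTop (𝓝 0) := by
    have h1 : Tendsto (fun n => (‖(μ[indR (A \ As n)|𝔄 n]) x‖₊ : ℝ≥0∞)) atTop (𝓝 0) :=
      tendsto_of_tendsto_of_tendsto_of_le_of_le tendsto_const_nhds hnorm
        (fun n => zero_le) hb
    have h2 : Tendsto (fun n => ‖(μ[indR (A \ As n)|𝔄 n]) x‖) atTop (𝓝 0) := by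
      rw [← ENNReal.coe_zero] at h1
      have h1' := ENNReal.tendsto_coe.1 h1
      have h2' := NNReal.tendsto_coe.2 h1'
      simpa [coe_nnnorm] using h2'
    exact tendsto_zero_iff_norm_tendsto_zero.2 h2
  have htend : Tendsto (fun n => indR (As n) x + (μ[indR (A \ As n)|𝔄 n]) x)
      atTop (𝓝 (indR A x)) := by
    simpa using hx.add hg0
  have hbdge : IsBoundedUnder (· ≥ ·) atTop (fun n => (μ[indR A|𝔄 n]) x) :=
    isBoundedUnder_of ⟨0, fun n => hnnx n⟩
  have hcb : IsCoboundedUnder (· ≤ ·) atTop (fun n => (μ[indR A|𝔄 n]) x) :=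
    hbdge.isCoboundedUnder_le
  have hbd : IsBoundedUnder (· ≤ ·) atTop
      (fun n => indR (As n) x + (μ[indR (A \ As n)|𝔄 n]) x) :=
    htend.isBoundedUnder_le
  calc Filter.limsup (fun n => (μ[indR A|𝔄 n]) x) atTop
      ≤ Filter.limsup (fun n => indR (As n) x + (μ[indR (A \ As n)|𝔄 n]) x) atTop :=
        limsup_le_limsup (Eventually.of_forall hkey) hcb hbd
    _ = indR A x := htend.limsup_eq
end
end

section
/- Let {𝔄_n} be sub-σ-algebras and A ∈ 𝔄. Suppose there is a sequence A_n ∈ 𝔄_n with χ_{A_n} → χ_A a.e. and E(χ_{A \ A_n} | 𝔄_n) → 0 almost everywhere. Then limsup_{n→∞} E(χ_A | 𝔄_n) ≤ χ_A almost everywhere. -/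
open MeasureTheory Filter Set Topology
open scoped ENNReal symmDiff

noncomputable section

theorem stmt9 {X : Type*} [mX : MeasurableSpace X] (μ : Measure X) [IsProbabilityMeasure μ]
    (𝔄 : ℕ → MeasurableSpace X) (h𝔄 : ∀ n, 𝔄 n ≤ mX)
    (A : Set X) (hA : MeasurableSet A) (As : ℕ → Set X)
    (hmes : ∀ n, MeasurableSet[𝔄 n] (As n))
    (hconv : ∀ᵐ x ∂μ, Tendsto (fun n => indR (As n) x) atTop (𝓝 (indR A x)))
    (hce : ∀ᵐ x ∂μ, Tendsto (fun n => (μ[indR (A \ As n) | 𝔄 n]) x) atTop (𝓝 0)) :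
    ∀ᵐ x ∂μ, Filter.limsup (fun n => (μ[indR A | 𝔄 n]) x) atTop ≤ indR A x := by
  have hAs : ∀ n, MeasurableSet (As n) := fun n => h𝔄 n _ (hmes n)
  have hint : ∀ (S : Set X), MeasurableSet S → Integrable (indR S) μ := fun S hS =>
    (integrable_const (1:ℝ)).indicator hS
  have hsplit : ∀ n, ∀ᵐ x ∂μ,
      (μ[indR A | 𝔄 n]) x = (μ[indR (A ∩ As n) | 𝔄 n]) x + (μ[indR (A \ As n) | 𝔄 n]) x := by
    intro n
    have h1 : indR A = indR (A ∩ As n) + indR (A \ As n) := by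
      funext x; simp only [indR, Pi.add_apply]
      by_cases hx : x ∈ A
      · by_cases hx2 : x ∈ As n <;> simp [Set.indicator_apply, hx, hx2]
      · simp [Set.indicator_apply, hx]
    rw [h1]
    exact condExp_add (hint _ (hA.inter (hAs n))) (hint _ (hA.diff (hAs n))) (𝔄 n)
  have hle : ∀ n, ∀ᵐ x ∂μ, (μ[indR (A ∩ As n) | 𝔄 n]) x ≤ indR (As n) x := by
    intro n
    have h2 : μ[indR (As n) | 𝔄 n] = indR (As n) :=
      condExp_of_stronglyMeasurable (h𝔄 n)
        (stronglyMeasurable_const.indicator (hmes n)) (hint _ (hAs n))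
    have h3 : μ[indR (A ∩ As n) | 𝔄 n] ≤ᵐ[μ] μ[indR (As n) | 𝔄 n] :=
      condExp_mono (hint _ (hA.inter (hAs n))) (hint _ (hAs n))
        (Filter.Eventually.of_forall fun x =>
          Set.indicator_le_indicator_of_subset Set.inter_subset_right (fun _ => zero_le_one) x)
    filter_upwards [h3] with x hx
    rw [h2] at hx; exact hx
  have hnn : ∀ n, ∀ᵐ x ∂μ, 0 ≤ (μ[indR A | 𝔄 n]) x :=
    fun n => condExp_nonneg (Filter.Eventually.of_forall fun x =>
      Set.indicator_nonneg (fun _ _ => zero_le_one) x)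
  filter_upwards [ae_all_iff.2 hsplit, ae_all_iff.2 hle, ae_all_iff.2 hnn, hconv, hce]
    with x hsx hlx hnx hcx hex
  have hg : Tendsto (fun n => indR (As n) x + (μ[indR (A \ As n) | 𝔄 n]) x) atTop
      (𝓝 (indR A x)) := by
    simpa using hcx.add hex
  calc Filter.limsup (fun n => (μ[indR A | 𝔄 n]) x) atTop
      ≤ Filter.limsup (fun n => indR (As n) x + (μ[indR (A \ As n) | 𝔄 n]) x) atTop := by
        apply Filter.limsup_le_limsup
        · exact Filter.Eventually.of_forall fun n => by
            show (μ[indR A | 𝔄 n]) x ≤ _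
            rw [hsx n]; exact add_le_add (hlx n) le_rfl
        · exact Filter.isCoboundedUnder_le_of_le (f := fun n => (μ[indR A | 𝔄 n]) x)
            (x := 0) atTop fun i => hnx i
        · exact hg.isBoundedUnder_le
    _ = indR A x := hg.limsup_eq
end
end

section
/- Let {𝔄_n} be sub-σ-algebras and A ∈ 𝔄. If both A and its complement A^c are uniformly covered by {𝔄_n}, then E(χ_A | 𝔄_n) → χ_A almost everywhere. -/
open MeasureTheory Filter Set Topology
open scoped ENNReal symmDiff

noncomputable section

lemma indR_integrable {X : Type*} [mX : MeasurableSpace X] (μ : Measure X)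
    [IsProbabilityMeasure μ] {S : Set X} (hS : MeasurableSet S) :
    Integrable (indR S) μ :=
  (integrable_const (1 : ℝ)).indicator hS

lemma indR_split {X : Type*} (S T : Set X) :
    indR S = indR (S ∩ T) + indR (S \ T) := by
  funext x
  simp only [indR, Pi.add_apply, Set.indicator_apply, Set.mem_inter_iff, Set.mem_diff]
  by_cases hS : x ∈ S <;> by_cases hT : x ∈ T <;> simp [hS, hT]

lemma aux_le {X : Type*} [mX : MeasurableSpace X] (μ : Measure X) [IsProbabilityMeasure μ]
    (m : MeasurableSpace X) (hm : m ≤ mX) {S Sn : Set X} (hS : MeasurableSet[mX] S)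
    (hSn : MeasurableSet[m] Sn) :
    ∀ᵐ x ∂μ, (μ[indR S | m]) x ≤ indR Sn x + (μ[indR (S \ Sn) | m]) x := by
  have hSn' : MeasurableSet[mX] Sn := hm _ hSn
  have hint1 : Integrable (indR (S ∩ Sn)) μ := indR_integrable (mX := mX) μ (hS.inter hSn')
  have hint2 : Integrable (indR (S \ Sn)) μ := indR_integrable (mX := mX) μ (hS.diff hSn')
  have hintSn : Integrable (indR Sn) μ := indR_integrable (mX := mX) μ hSn'
  have hadd : μ[indR S | m] =ᵐ[μ] μ[indR (S ∩ Sn) | m] + μ[indR (S \ Sn) | m] := by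
    rw [indR_split S Sn]
    exact condExp_add hint1 hint2 m
  have hmono : μ[indR (S ∩ Sn) | m] ≤ᵐ[μ] μ[indR Sn | m] := by
    refine condExp_mono hint1 hintSn (Filter.Eventually.of_forall fun x => ?_)
    exact Set.indicator_le_indicator_of_subset Set.inter_subset_right (fun _ => zero_le_one) x
  have heq : μ[indR Sn | m] = indR Sn :=
    condExp_of_stronglyMeasurable hm (stronglyMeasurable_const.indicator hSn) hintSn
  filter_upwards [hadd, hmono] with x h1 h2
  rw [h1]
  simp only [Pi.add_apply]
  have := h2
  rw [heq] at this
  linarith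

theorem stmt10 {X : Type*} [mX : MeasurableSpace X] (μ : Measure X) [IsProbabilityMeasure μ]
    (𝔄 : ℕ → MeasurableSpace X) (h𝔄 : ∀ n, 𝔄 n ≤ mX)
    (A : Set X) (hA : MeasurableSet A)
    (hcA : UnifCovered μ 𝔄 A) (hcAc : UnifCovered μ 𝔄 Aᶜ) :
    ∀ᵐ x ∂μ, Tendsto (fun n => (μ[indR A | 𝔄 n]) x) atTop (𝓝 (indR A x)) := by
  obtain ⟨As, hAsm, hAsae, hAse⟩ := hcA
  obtain ⟨Bs, hBsm, hBsae, hBse⟩ := hcAc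
  have h1 : ∀ᵐ x ∂μ, ∀ n, (μ[indR A | 𝔄 n]) x ≤
      indR (As n) x + (μ[indR (A \ As n) | 𝔄 n]) x :=
    (ae_all_iff).mpr fun n => aux_le μ (𝔄 n) (h𝔄 n) hA (hAsm n)
  have h2 : ∀ᵐ x ∂μ, ∀ n, (μ[indR Aᶜ | 𝔄 n]) x ≤
      indR (Bs n) x + (μ[indR (Aᶜ \ Bs n) | 𝔄 n]) x :=
    (ae_all_iff).mpr fun n => aux_le μ (𝔄 n) (h𝔄 n) hA.compl (hBsm n)
  have h3 : ∀ᵐ x ∂μ, ∀ n, (μ[indR A | 𝔄 n]) x + (μ[indR Aᶜ | 𝔄 n]) x = 1 := by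
    refine (ae_all_iff).mpr fun n => ?_
    have hone : indR A + indR Aᶜ = fun _ => (1 : ℝ) := by
      funext x
      simp only [indR, Pi.add_apply, Set.indicator_apply, Set.mem_compl_iff]
      by_cases hx : x ∈ A <;> simp [hx]
    have := condExp_add (μ := μ) (m := 𝔄 n) (indR_integrable μ hA) (indR_integrable μ hA.compl)
    rw [hone, condExp_const (h𝔄 n) (1 : ℝ)] at this
    filter_upwards [this] with x hx
    simpa using hx.symm
  have h4 : ∀ᵐ x ∂μ, ∀ n, (‖(μ[indR (A \ As n) | 𝔄 n]) x‖₊ : ℝ≥0∞) ≤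
      eLpNorm (μ[indR (A \ As n) | 𝔄 n]) ⊤ μ := by
    refine (ae_all_iff).mpr fun n => ?_
    rw [eLpNorm_exponent_top]
    exact ae_le_eLpNormEssSup
  have h5 : ∀ᵐ x ∂μ, ∀ n, (‖(μ[indR (Aᶜ \ Bs n) | 𝔄 n]) x‖₊ : ℝ≥0∞) ≤
      eLpNorm (μ[indR (Aᶜ \ Bs n) | 𝔄 n]) ⊤ μ := by
    refine (ae_all_iff).mpr fun n => ?_
    rw [eLpNorm_exponent_top]
    exact ae_le_eLpNormEssSup
  filter_upwards [h1, h2, h3, h4, h5, hAsae, hBsae] with x hx1 hx2 hx3 hx4 hx5 hxA hxB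
  -- error terms tend to zero
  have eA : Tendsto (fun n => (μ[indR (A \ As n) | 𝔄 n]) x) atTop (𝓝 0) := by
    have hcoe : Tendsto (fun n => (‖(μ[indR (A \ As n) | 𝔄 n]) x‖₊ : ℝ≥0∞)) atTop (𝓝 0) :=
      tendsto_of_tendsto_of_tendsto_of_le_of_le tendsto_const_nhds hAse
        (fun n => zero_le) hx4
    have h' : Tendsto (fun n => ‖(μ[indR (A \ As n) | 𝔄 n]) x‖₊) atTop (𝓝 0) :=
      ENNReal.tendsto_coe.mp (by simpa using hcoe)
    refine squeeze_zero_norm (fun n => le_rfl) ?_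
    have := NNReal.tendsto_coe.mpr h'
    simpa using this
  have eB : Tendsto (fun n => (μ[indR (Aᶜ \ Bs n) | 𝔄 n]) x) atTop (𝓝 0) := by
    have hcoe : Tendsto (fun n => (‖(μ[indR (Aᶜ \ Bs n) | 𝔄 n]) x‖₊ : ℝ≥0∞)) atTop (𝓝 0) :=
      tendsto_of_tendsto_of_tendsto_of_le_of_le tendsto_const_nhds hBse
        (fun n => zero_le) hx5
    have h' : Tendsto (fun n => ‖(μ[indR (Aᶜ \ Bs n) | 𝔄 n]) x‖₊) atTop (𝓝 0) :=
      ENNReal.tendsto_coe.mp (by simpa using hcoe)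
    refine squeeze_zero_norm (fun n => le_rfl) ?_
    have := NNReal.tendsto_coe.mpr h'
    simpa using this
  have hcomp : indR Aᶜ x = 1 - indR A x := by
    simp only [indR, Set.indicator_apply, Set.mem_compl_iff]
    by_cases hx : x ∈ A <;> simp [hx]
  have hupper : Tendsto (fun n => indR (As n) x + (μ[indR (A \ As n) | 𝔄 n]) x)
      atTop (𝓝 (indR A x)) := by
    simpa using hxA.add eA
  have hlower : Tendsto (fun n => 1 - indR (Bs n) x - (μ[indR (Aᶜ \ Bs n) | 𝔄 n]) x)
      atTop (𝓝 (indR A x)) := by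
    have := ((tendsto_const_nhds (x := (1:ℝ)) (f := atTop (α := ℕ))).sub hxB).sub eB
    simpa [hcomp] using this
  refine tendsto_of_tendsto_of_tendsto_of_le_of_le hlower hupper (fun n => ?_) (fun n => hx1 n)
  have := hx2 n
  have h3n := hx3 n
  linarith
end
end

section
/- Let {𝔄_n} be sub-σ-algebras and suppose 𝔄_{μ.a.e.} = {A : A and A^c are uniformly covered by {𝔄_n}} is a σ-algebra. Then for every f ∈ L^∞ that is 𝔄_{μ.a.e.}-measurable, E(f | 𝔄_n) → f almost everywhere. -/
open MeasureTheory Filter Set Topology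
open scoped ENNReal symmDiff

noncomputable section

def AlgAE {X : Type*} [mX : MeasurableSpace X] (μ : Measure X)
    (𝔄 : ℕ → MeasurableSpace X) : Set (Set X) :=
  {A | MeasurableSet A ∧ UnifCovered μ 𝔄 A ∧ UnifCovered μ 𝔄 Aᶜ}

section Aux
open scoped NNReal

lemma integrable_of_bdd' {X : Type*} [mX : MeasurableSpace X] {μ : Measure X}
    [IsFiniteMeasure μ] {f : X → ℝ} (hf : AEStronglyMeasurable f μ) {C : ℝ}
    (h : ∀ x, |f x| ≤ C) : Integrable f μ :=
  Integrable.mono' (integrable_const C) hf (ae_of_all _ fun x => by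
    simpa [Real.norm_eq_abs] using h x)

lemma indR_meas {X : Type*} {mX : MeasurableSpace X} {A : Set X} (hA : MeasurableSet[mX] A) :
    Measurable[mX] (indR A) := (measurable_const.indicator hA)

lemma indR_int {X : Type*} [mX : MeasurableSpace X] {μ : Measure X} [IsFiniteMeasure μ]
    {A : Set X} (hA : MeasurableSet A) : Integrable (indR A) μ :=
  integrable_of_bdd' (indR_meas hA).aestronglyMeasurable (C := 1)
    (fun x => by by_cases h : x ∈ A <;> simp [indR, h])


/-- one-sided estimate: if `As` uniformly covers `A`, then a.e.
`μ[indR A|𝔄 n] x ≤ indR (As n) x + r n x` with `r n x → 0`. -/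
lemma upper_est {X : Type*} [mX : MeasurableSpace X] (μ : Measure X) [IsProbabilityMeasure μ]
    (𝔄 : ℕ → MeasurableSpace X) (h𝔄 : ∀ n, 𝔄 n ≤ mX) {A : Set X} (hA : MeasurableSet A)
    {As : ℕ → Set X} (hAs : UnifCovers μ 𝔄 A As) :
    ∀ᵐ x ∂μ, ∃ r : ℕ → ℝ, Tendsto r atTop (𝓝 0) ∧
      ∀ n, (μ[indR A | 𝔄 n]) x ≤ indR (As n) x + r n := by
  obtain ⟨hAsm, _, hnorm⟩ := hAs
  set r : ℕ → X → ℝ := fun n => μ[indR (A \ As n) | 𝔄 n] with hr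
  -- a.e. facts for each n
  have key : ∀ n, ∀ᵐ x ∂μ, (μ[indR A | 𝔄 n]) x ≤ indR (As n) x + r n x := by
    intro n
    have hAsn : MeasurableSet (As n) := h𝔄 n _ (hAsm n)
    have hsplit : indR A = indR (A ∩ As n) + indR (A \ As n) := by
      funext x
      by_cases h1 : x ∈ A <;> by_cases h2 : x ∈ As n <;>
        simp [indR, h1, h2]
    have h1 : μ[indR A | 𝔄 n] =ᵐ[μ] μ[indR (A ∩ As n) | 𝔄 n] + μ[indR (A \ As n) | 𝔄 n] := by
      rw [hsplit]
      exact condExp_add (μ := μ) (indR_int (hA.inter hAsn)) (indR_int (hA.diff hAsn)) (𝔄 n)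
    have h2 : μ[indR (A ∩ As n) | 𝔄 n] ≤ᵐ[μ] μ[indR (As n) | 𝔄 n] := by
      refine condExp_mono (indR_int (hA.inter hAsn)) (indR_int hAsn)
        (ae_of_all _ fun x => ?_)
      exact Set.indicator_le_indicator_of_subset inter_subset_right (fun _ => zero_le_one) x
    have h3 : μ[indR (As n) | 𝔄 n] = indR (As n) :=
      condExp_of_stronglyMeasurable (h𝔄 n)
        ((stronglyMeasurable_const (β := ℝ)).indicator (hAsm n)) (indR_int hAsn)
    filter_upwards [h1, h2] with x hx1 hx2
    rw [hx1, Pi.add_apply]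
    exact add_le_add (h3 ▸ hx2) le_rfl
  have bdd : ∀ n, ∀ᵐ x ∂μ, (‖r n x‖₊ : ℝ≥0∞) ≤ eLpNorm (r n) ⊤ μ := by
    intro n
    simpa [eLpNorm_exponent_top, enorm_eq_nnnorm] using ae_le_eLpNormEssSup (f := r n) (μ := μ)
  filter_upwards [ae_all_iff.2 key, ae_all_iff.2 bdd] with x hx hb
  refine ⟨fun n => r n x, ?_, hx⟩
  have h0 : Tendsto (fun n => (‖r n x‖₊ : ℝ≥0∞)) atTop (𝓝 0) :=
    tendsto_of_tendsto_of_tendsto_of_le_of_le tendsto_const_nhds hnorm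
      (fun n => zero_le) hb
  have h0' : Tendsto (fun n => ‖r n x‖₊) atTop (𝓝 (0 : ℝ≥0)) :=
    ENNReal.tendsto_coe.mp (by rw [ENNReal.coe_zero]; exact h0)
  have h0'' : Tendsto (fun n => |r n x|) atTop (𝓝 (0 : ℝ)) := by
    have := NNReal.tendsto_coe.mpr h0'
    simpa [Real.norm_eq_abs] using this
  exact (tendsto_zero_iff_abs_tendsto_zero _).2 h0''

lemma ind_tendsto {X : Type*} [mX : MeasurableSpace X] (μ : Measure X) [IsProbabilityMeasure μ]
    (𝔄 : ℕ → MeasurableSpace X) (h𝔄 : ∀ n, 𝔄 n ≤ mX) {A : Set X}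
    (hA : A ∈ AlgAE (mX := mX) μ 𝔄) :
    ∀ᵐ x ∂μ, Tendsto (fun n => (μ[indR A | 𝔄 n]) x) atTop (𝓝 (indR A x)) := by
  obtain ⟨hAm, ⟨As, hAs⟩, ⟨Bs, hBs⟩⟩ := hA
  have hconvA := hAs.2.1
  have hconvB := hBs.2.1
  have hsum : ∀ n, μ[indR A | 𝔄 n] + μ[indR Aᶜ | 𝔄 n] =ᵐ[μ] fun _ => (1 : ℝ) := by
    intro n
    have h1 : indR A + indR Aᶜ = fun _ => (1 : ℝ) := by
      funext x; by_cases h : x ∈ A <;> simp [indR, h]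
    have h2 := (condExp_add (μ := μ) (m := 𝔄 n) (indR_int hAm) (indR_int hAm.compl)).symm
    have h3 : μ[indR A + indR Aᶜ | 𝔄 n] = fun _ => (1 : ℝ) := by
      rw [h1]
      exact condExp_const (h𝔄 n) (1 : ℝ)
    exact h2.trans (h3 ▸ EventuallyEq.rfl)
  filter_upwards [upper_est μ 𝔄 h𝔄 hAm hAs, upper_est μ 𝔄 h𝔄 hAm.compl hBs,
    ae_all_iff.2 hsum, hconvA, hconvB] with x ⟨r, hr0, hru⟩ ⟨s, hs0, hsu⟩ hsx hcA hcB
  -- lower and upper bounds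
  have hup : ∀ n, (μ[indR A | 𝔄 n]) x ≤ indR (As n) x + r n := hru
  have hlow : ∀ n, 1 - indR (Bs n) x - s n ≤ (μ[indR A | 𝔄 n]) x := by
    intro n
    have h : (μ[indR Aᶜ | 𝔄 n]) x ≤ indR (Bs n) x + s n := hsu n
    have h2 : (μ[indR A | 𝔄 n]) x + (μ[indR Aᶜ | 𝔄 n]) x = 1 := by
      simpa using hsx n
    linarith
  have hcompl : indR Aᶜ x = 1 - indR A x := by
    by_cases h : x ∈ A <;> simp [indR, h]
  have hupper : Tendsto (fun n => indR (As n) x + r n) atTop (𝓝 (indR A x)) := by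
    simpa using hcA.add hr0
  have hlower : Tendsto (fun n => 1 - indR (Bs n) x - s n) atTop (𝓝 (indR A x)) := by
    have : Tendsto (fun n => 1 - indR (Bs n) x - s n) atTop (𝓝 (1 - indR Aᶜ x - 0)) :=
      (tendsto_const_nhds.sub hcB).sub hs0
    rw [hcompl] at this
    simpa using this
  exact tendsto_of_tendsto_of_tendsto_of_le_of_le hlower hupper hlow hup

lemma simple_tendsto {X : Type*} [mX : MeasurableSpace X] (μ : Measure X)
    [IsProbabilityMeasure μ] (𝔄 : ℕ → MeasurableSpace X) (h𝔄 : ∀ n, 𝔄 n ≤ mX)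
    (m : MeasurableSpace X) (hm : ∀ s : Set X, MeasurableSet[m] s ↔ s ∈ AlgAE (mX := mX) μ 𝔄)
    (hm' : m ≤ mX) (s : @SimpleFunc X m ℝ) :
    ∀ᵐ x ∂μ, Tendsto (fun n => (μ[⇑s | 𝔄 n]) x) atTop (𝓝 (s x)) := by
  have hint : ∀ t : @SimpleFunc X m ℝ, Integrable (⇑t) μ := by
    intro t
    obtain ⟨C, hC⟩ := t.exists_forall_norm_le
    have h1 := (@SimpleFunc.stronglyMeasurable X ℝ m _ t).mono hm'
    have h2 := h1.aestronglyMeasurable (μ := μ)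
    exact Integrable.mono' (integrable_const C) h2 (Eventually.of_forall fun x => hC x)
  refine @SimpleFunc.induction X ℝ m _
    (fun t => ∀ᵐ x ∂μ, Tendsto (fun n => (μ[⇑t | 𝔄 n]) x) atTop (𝓝 (t x)))
    ?_ ?_ s
  · intro c t ht
    have hcoe : ⇑(SimpleFunc.piecewise t ht (@SimpleFunc.const X ℝ m c)
        (@SimpleFunc.const X ℝ m (0 : ℝ))) = c • indR t := by
      funext x
      by_cases h : x ∈ t <;> simp [SimpleFunc.piecewise_apply, indR, h]
    rw [hcoe]
    have htA : t ∈ @AlgAE X mX μ 𝔄 := (hm t).mp ht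
    have hIT := @ind_tendsto X mX μ _ 𝔄 h𝔄 t htA
    filter_upwards [ae_all_iff.2 (fun n => condExp_smul (μ := μ) (m := 𝔄 n) c (indR t)),
      hIT] with x hx hix
    have : Tendsto (fun n => c • (μ[indR t | 𝔄 n]) x) atTop (𝓝 (c • indR t x)) :=
      hix.const_smul c
    refine this.congr fun n => ?_
    have := hx n
    simp only [Pi.smul_apply] at this ⊢
    rw [this]
  · intro f g _ hf hg
    filter_upwards [hf, hg,
      ae_all_iff.2 (fun n => condExp_add (μ := μ) (m := 𝔄 n) (hint f) (hint g))]
      with x h1 h2 h3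
    have : Tendsto (fun n => (μ[⇑f | 𝔄 n]) x + (μ[⇑g | 𝔄 n]) x) atTop (𝓝 (f x + g x)) :=
      h1.add h2
    simp only [SimpleFunc.coe_add]
    refine this.congr fun n => ?_
    have := h3 n
    simp only [Pi.add_apply] at this ⊢
    rw [this]

lemma exists_simple_approx {X : Type*} (m : MeasurableSpace X) {f : X → ℝ}
    (hf : Measurable[m] f) {C : ℝ} (hC : ∀ x, |f x| ≤ C) (k : ℕ) :
    ∃ s : @SimpleFunc X m ℝ, ∀ x, |s x - f x| ≤ 1 / (k + 1) := by
  have hk : (0:ℝ) < (k:ℝ) + 1 := by positivity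
  set g : X → ℝ := fun x => (⌊f x * ((k:ℝ)+1)⌋ : ℝ) / ((k:ℝ)+1) with hg
  have hgm : Measurable[m] g := by
    have h1 : Measurable[m] fun x => ⌊f x * ((k:ℝ)+1)⌋ := (hf.mul_const _).floor
    exact (measurable_from_top (f := fun j : ℤ => (j:ℝ)/((k:ℝ)+1))).comp h1
  have hfin : (Set.range g).Finite := by
    have hsub : Set.range g ⊆
        (fun j : ℤ => (j:ℝ)/((k:ℝ)+1)) '' (Set.Icc ⌊(-C)*((k:ℝ)+1)⌋ ⌊C*((k:ℝ)+1)⌋) := by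
      rintro _ ⟨x, rfl⟩
      refine ⟨⌊f x * ((k:ℝ)+1)⌋, Set.mem_Icc.2 ⟨?_, ?_⟩, rfl⟩
      · exact Int.floor_le_floor (by nlinarith [abs_le.1 (hC x)])
      · exact Int.floor_le_floor (by nlinarith [abs_le.1 (hC x)])
    exact ((Set.finite_Icc _ _).image _).subset hsub
  refine ⟨⟨g, fun c => hgm (measurableSet_singleton c), hfin⟩, fun x => ?_⟩
  show |g x - f x| ≤ 1 / ((k:ℝ) + 1)
  set y : ℝ := f x * ((k:ℝ)+1) with hy
  have hfx : f x = y / ((k:ℝ)+1) := by field_simp [hy]; exact hy.symm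
  have hb : |((⌊y⌋:ℝ) - y)| ≤ 1 := by
    rw [abs_le]
    constructor <;> [linarith [Int.lt_floor_add_one y]; linarith [Int.floor_le y]]
  have heq : g x - f x = ((⌊y⌋:ℝ) - y) / ((k:ℝ)+1) := by
    rw [hfx, hg]; ring
  rw [heq, abs_div, abs_of_pos hk]
  gcongr

lemma stmt14_aux {X : Type*} (m : MeasurableSpace X) [mX : MeasurableSpace X]
    (μ : Measure X) [IsProbabilityMeasure μ]
    (𝔄 : ℕ → MeasurableSpace X) (h𝔄 : ∀ n, 𝔄 n ≤ mX)
    (hm : ∀ s : Set X, MeasurableSet[m] s ↔ s ∈ @AlgAE X mX μ 𝔄)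
    (f : X → ℝ) (hf : Measurable[m] f) (hbd : ∃ C : ℝ, ∀ x, |f x| ≤ C) :
    ∀ᵐ x ∂μ, Tendsto (fun n => (μ[f | 𝔄 n]) x) atTop (𝓝 (f x)) := by
  have hm' : m ≤ mX := fun s hs => ((hm s).mp hs).1
  obtain ⟨C, hC⟩ := hbd
  choose gs hgs using fun k => exists_simple_approx m hf hC k
  have hfm : Measurable[mX] f := hf.mono hm' le_rfl
  have hfint : Integrable f μ := integrable_of_bdd' hfm.aestronglyMeasurable hC
  have hgint : ∀ k, Integrable (⇑(gs k)) μ := by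
    intro k
    obtain ⟨D, hD⟩ := @SimpleFunc.exists_forall_norm_le X ℝ m _ (gs k)
    exact Integrable.mono' (integrable_const D)
      (((@SimpleFunc.stronglyMeasurable X ℝ m _ (gs k)).mono hm').aestronglyMeasurable)
      (Eventually.of_forall fun x => hD x)
  have heq : ∀ k n, μ[f | 𝔄 n] =ᵐ[μ] μ[⇑(gs k) | 𝔄 n] + μ[f - ⇑(gs k) | 𝔄 n] := by
    intro k n
    have hsplit : (⇑(gs k)) + (f - ⇑(gs k)) = f := by funext x; simp
    have h := condExp_add (μ := μ) (m := 𝔄 n) (hgint k) (hfint.sub (hgint k))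
    rw [hsplit] at h
    exact h
  have hbdd : ∀ k n, ∀ᵐ x ∂μ, |(μ[f - ⇑(gs k) | 𝔄 n]) x| ≤ 1 / ((k:ℝ) + 1) := by
    intro k n
    have hkpos : (0:ℝ) ≤ 1 / ((k:ℝ) + 1) := by positivity
    set R : ℝ≥0 := ⟨1 / ((k:ℝ) + 1), hkpos⟩ with hR
    have hfg : ∀ᵐ x ∂μ, |(f - ⇑(gs k)) x| ≤ (R : ℝ) := by
      refine ae_of_all _ fun x => ?_
      have := hgs k x
      simp only [Pi.sub_apply]
      rw [abs_sub_comm]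
      exact this
    have := ae_bdd_condExp_of_ae_bdd (m := 𝔄 n) hfg
    exact this
  have hST : ∀ k, ∀ᵐ x ∂μ, Tendsto (fun n => (μ[⇑(gs k) | 𝔄 n]) x) atTop (𝓝 (gs k x)) :=
    fun k => simple_tendsto μ 𝔄 h𝔄 m hm hm' (gs k)
  filter_upwards [ae_all_iff.2 hST, ae_all_iff.2 (fun k => ae_all_iff.2 (heq k)),
    ae_all_iff.2 (fun k => ae_all_iff.2 (hbdd k))] with x h1 h2 h3
  rw [Metric.tendsto_atTop]
  intro ε hε
  obtain ⟨k, hk⟩ : ∃ k : ℕ, 3 / ((k:ℝ) + 1) < ε := by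
    obtain ⟨k, hk⟩ := exists_nat_gt (3 / ε)
    refine ⟨k, ?_⟩
    rw [div_lt_iff₀ (by positivity)]
    rw [div_lt_iff₀ hε] at hk
    nlinarith
  obtain ⟨N, hN⟩ := (Metric.tendsto_atTop.1 (h1 k)) (1 / ((k:ℝ) + 1)) (by positivity)
  refine ⟨N, fun n hn => ?_⟩
  have e1 : (μ[f | 𝔄 n]) x = (μ[⇑(gs k) | 𝔄 n]) x + (μ[f - ⇑(gs k) | 𝔄 n]) x := by
    simpa using h2 k n
  have e2 : |(μ[f - ⇑(gs k) | 𝔄 n]) x| ≤ 1 / ((k:ℝ) + 1) := h3 k n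
  have e3 : |gs k x - f x| ≤ 1 / ((k:ℝ) + 1) := hgs k x
  have e4 : |(μ[⇑(gs k) | 𝔄 n]) x - gs k x| < 1 / ((k:ℝ) + 1) := by
    simpa [Real.dist_eq] using hN n hn
  rw [Real.dist_eq]
  have hsum : (μ[f | 𝔄 n]) x - f x =
      ((μ[⇑(gs k) | 𝔄 n]) x - gs k x) + (μ[f - ⇑(gs k) | 𝔄 n]) x + (gs k x - f x) := by
    rw [e1]; ring
  rw [hsum]
  calc |((μ[⇑(gs k) | 𝔄 n]) x - gs k x) + (μ[f - ⇑(gs k) | 𝔄 n]) x + (gs k x - f x)|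
      ≤ |((μ[⇑(gs k) | 𝔄 n]) x - gs k x) + (μ[f - ⇑(gs k) | 𝔄 n]) x| + |gs k x - f x| :=
        abs_add_le _ _
    _ ≤ |(μ[⇑(gs k) | 𝔄 n]) x - gs k x| + |(μ[f - ⇑(gs k) | 𝔄 n]) x| + |gs k x - f x| := by
        gcongr; exact abs_add_le _ _
    _ < ε := by
        have : 1 / ((k:ℝ) + 1) + 1 / ((k:ℝ) + 1) + 1 / ((k:ℝ) + 1) = 3 / ((k:ℝ) + 1) := by ring
        linarith


end Aux

theorem stmt14 {X : Type*} [mX : MeasurableSpace X] (μ : Measure X) [IsProbabilityMeasure μ]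
    (𝔄 : ℕ → MeasurableSpace X) (h𝔄 : ∀ n, 𝔄 n ≤ mX)
    (m : MeasurableSpace X) (hm : ∀ s : Set X, MeasurableSet[m] s ↔ s ∈ AlgAE (mX := mX) μ 𝔄)
    (f : X → ℝ) (hf : Measurable[m] f) (hbd : ∃ C : ℝ, ∀ x, |f x| ≤ C) :
    ∀ᵐ x ∂μ, Tendsto (fun n => (μ[f | 𝔄 n]) x) atTop (𝓝 (f x)) := by
  exact @stmt14_aux X m mX μ _ 𝔄 h𝔄 hm f hf hbd
end
end

section
/- Let {𝔄_n} be sub-σ-algebras and 𝔅 a sub-σ-algebra such that for all f ∈ L^∞(𝔅), E(f | 𝔄_n) → E(f|𝔅) = f almost everywhere. Then every A ∈ 𝔅 and its complement are uniformly covered by {𝔄_n}, i.e., 𝔅 ⊆ 𝔄_{μ.a.e.}. -/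
open MeasureTheory Filter Set Topology
open scoped ENNReal symmDiff

noncomputable section

lemma indR_abs_le_one {X : Type*} (A : Set X) (x : X) : |indR A x| ≤ 1 := by
  by_cases hx : x ∈ A <;> simp [indR, Set.indicator_apply, hx]

lemma unifCovered_aux {X : Type*} [mX : MeasurableSpace X] (μ : Measure X)
    [IsProbabilityMeasure μ]
    (𝔄 : ℕ → MeasurableSpace X) (h𝔄 : ∀ n, 𝔄 n ≤ mX) (A : Set X) (hA : MeasurableSet A)
    (hconv : ∀ᵐ x ∂μ, Tendsto (fun n => (μ[indR A | 𝔄 n]) x) atTop (𝓝 (indR A x))) :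
    UnifCovered μ 𝔄 A := by
  classical
  set g : ℕ → X → ℝ := fun n => μ[indR A | 𝔄 n] with hg
  have hint : Integrable (indR A) μ := (integrable_const (1 : ℝ)).indicator hA
  have hgm : ∀ n, StronglyMeasurable (g n) :=
    fun n => stronglyMeasurable_condExp.mono (h𝔄 n)
  have hAm : StronglyMeasurable (indR A) :=
    (measurable_const.indicator hA).stronglyMeasurable
  -- Egorov sets
  have ego : ∀ k : ℕ, ∃ t : Set X, MeasurableSet t ∧ μ t ≤ ENNReal.ofReal ((1/2 : ℝ)^k) ∧
      TendstoUniformlyOn g (indR A) atTop tᶜ := fun k =>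
    tendstoUniformlyOn_of_ae_tendsto' hgm hAm hconv (by positivity)
  choose t htm htμ htu using ego
  -- uniform-convergence thresholds
  have hN : ∀ k : ℕ, ∃ N : ℕ, ∀ n ≥ N, ∀ x ∈ (t k)ᶜ,
      dist (indR A x) (g n x) < ((k : ℝ) + 1)⁻¹ := by
    intro k
    have := Metric.tendstoUniformlyOn_iff.1 (htu k) (((k : ℝ) + 1)⁻¹) (by positivity)
    rw [eventually_atTop] at this
    obtain ⟨N, hNa⟩ := this
    exact ⟨N, fun n hn x hx => hNa n hn x hx⟩
  choose N hNs using hN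
  -- the slowly increasing index
  set K : ℕ → ℕ := fun n => Nat.findGreatest (fun k => ∀ j ≤ k, N j ≤ n) n with hK
  have hKtop : Tendsto K atTop atTop := by
    rw [tendsto_atTop_atTop]
    intro b
    refine ⟨max b ((Finset.range (b + 1)).sup N), fun n hn => ?_⟩
    refine Nat.le_findGreatest (le_trans (le_max_left _ _) hn) (fun j hj => ?_)
    exact le_trans (Finset.le_sup (Finset.mem_range.2 (Nat.lt_succ_of_le hj)))
      (le_trans (le_max_right _ _) hn)
  have hKspec : ∀ n, 0 < K n → N (K n) ≤ n := by
    intro n hpos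
    have h1 := (Nat.findGreatest_eq_iff.1 (rfl :
      Nat.findGreatest (fun k => ∀ j ≤ k, N j ≤ n) n = K n)).2.1
    exact h1 (Nat.pos_iff_ne_zero.1 hpos) (K n) le_rfl
  set ε : ℕ → ℝ := fun n => ((K n : ℝ) + 1)⁻¹ with hε
  have hεpos : ∀ n, 0 < ε n := fun n => by positivity
  have hεto0 : Tendsto ε atTop (𝓝 0) := by
    apply tendsto_inv_atTop_zero.comp
    exact tendsto_atTop_add_const_right _ 1 (tendsto_natCast_atTop_atTop.comp hKtop)
  -- the covering sets
  set As : ℕ → Set X := fun n => {x | ε n < g n x} with hAs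
  have hAsm : ∀ n, MeasurableSet[𝔄 n] (As n) := fun n =>
    measurableSet_lt (f := fun _ => ε n) measurable_const stronglyMeasurable_condExp.measurable
  refine ⟨As, hAsm, ?_, ?_⟩
  · -- a.e. pointwise convergence of indicators
    have hsum : ∑' k, μ (t k) ≠ ∞ := by
      have h1 : ∑' k, μ (t k) ≤ ∑' k : ℕ, (ENNReal.ofReal (1/2 : ℝ)) ^ k := by
        refine ENNReal.tsum_le_tsum (fun k => le_trans (htμ k) ?_)
        rw [← ENNReal.ofReal_pow (by norm_num)]
      refine ne_top_of_le_ne_top ?_ h1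
      rw [ENNReal.tsum_geometric, Ne, ENNReal.inv_eq_top, tsub_eq_zero_iff_le]
      rw [show (1 : ℝ≥0∞) = ENNReal.ofReal 1 by simp]
      intro hcon
      have := (ENNReal.ofReal_le_ofReal_iff (by norm_num)).1 hcon
      norm_num at this
    have hBC : ∀ᵐ x ∂μ, ∀ᶠ k in atTop, x ∉ t k := ae_eventually_notMem hsum
    filter_upwards [hconv, hBC] with x hx hbc
    by_cases hxA : x ∈ A
    · have hx1 : indR A x = 1 := by simp [indR, hxA]
      rw [hx1] at hx ⊢
      have h1 : ∀ᶠ n in atTop, (1/2 : ℝ) < g n x :=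
        hx.eventually (eventually_gt_nhds (by norm_num))
      have h2 : ∀ᶠ n in atTop, ε n < 1/2 :=
        hεto0.eventually (eventually_lt_nhds (by norm_num))
      have h3 : ∀ᶠ n in atTop, indR (As n) x = 1 := by
        filter_upwards [h1, h2] with n hn1 hn2
        have : x ∈ As n := lt_trans hn2 hn1
        simp [indR, this]
      exact tendsto_const_nhds.congr' (h3.mono fun n hn => hn.symm)
    · have hx0 : indR A x = 0 := by simp [indR, hxA]
      rw [hx0]
      obtain ⟨k1, hk1⟩ := eventually_atTop.1 hbc
      have h2 : ∀ᶠ n in atTop, max k1 1 ≤ K n := hKtop.eventually (eventually_ge_atTop _)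
      have h3 : ∀ᶠ n in atTop, indR (As n) x = 0 := by
        filter_upwards [h2] with n hn
        have hKpos : 0 < K n := lt_of_lt_of_le (lt_of_lt_of_le one_pos (le_max_right k1 1)) hn
        have hxt : x ∈ (t (K n))ᶜ := hk1 (K n) (le_trans (le_max_left k1 1) hn)
        have hdist := hNs (K n) n (hKspec n hKpos) x hxt
        have : ¬ x ∈ As n := by
          intro hxAs
          have hgx : ε n < g n x := hxAs
          rw [hx0, Real.dist_eq, zero_sub, abs_neg, abs_of_nonneg
            (le_of_lt (lt_trans (hεpos n) hgx))] at hdist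
          exact absurd (lt_trans hgx hdist) (lt_irrefl _)
        simp [indR, this]
      exact tendsto_const_nhds.congr' (h3.mono fun n hn => hn.symm)
  · -- sup-norm convergence
    have hbound : ∀ n, eLpNorm (μ[indR (A \ As n) | 𝔄 n]) ⊤ μ ≤ ENNReal.ofReal (ε n) := by
      intro n
      have heq : indR (A \ As n) = ((As n)ᶜ).indicator (indR A) := by
        ext x
        by_cases hx1 : x ∈ As n <;> by_cases hx2 : x ∈ A <;>
          simp [indR, Set.indicator_apply, Set.mem_diff, hx1, hx2]
      have hce : μ[indR (A \ As n) | 𝔄 n] =ᵐ[μ] ((As n)ᶜ).indicator (g n) := by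
        rw [heq]
        exact condExp_indicator hint (hAsm n).compl
      have hnonneg : 0 ≤ᵐ[μ] g n :=
        condExp_nonneg (ae_of_all _ (indR_nonneg A))
      have hb : ∀ᵐ y ∂μ, ‖(μ[indR (A \ As n) | 𝔄 n]) y‖ ≤ ε n := by
        filter_upwards [hce, hnonneg] with y hy1 hy2
        rw [hy1, Real.norm_eq_abs]
        by_cases hy : y ∈ (As n)ᶜ
        · rw [Set.indicator_of_mem hy]
          rw [abs_of_nonneg hy2]
          exact le_of_not_gt hy
        · rw [Set.indicator_of_notMem hy]
          simp [le_of_lt (hεpos n)]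
      have := eLpNorm_le_of_ae_bound (p := ⊤) hb
      simpa [ENNReal.toReal_top] using this
    have hofReal : Tendsto (fun n => ENNReal.ofReal (ε n)) atTop (𝓝 0) := by
      rw [show (0 : ℝ≥0∞) = ENNReal.ofReal 0 by simp]
      exact ENNReal.tendsto_ofReal hεto0
    exact tendsto_of_tendsto_of_tendsto_of_le_of_le tendsto_const_nhds hofReal
      (fun n => zero_le) hbound

theorem stmt15 {X : Type*} [mX : MeasurableSpace X] (μ : Measure X) [IsProbabilityMeasure μ]
    (𝔄 : ℕ → MeasurableSpace X) (h𝔄 : ∀ n, 𝔄 n ≤ mX)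
    (𝔅 : MeasurableSpace X) (h𝔅 : 𝔅 ≤ mX)
    (h : ∀ f : X → ℝ, Measurable[𝔅] f → (∃ C : ℝ, ∀ x, |f x| ≤ C) →
      ∀ᵐ x ∂μ, Tendsto (fun n => (μ[f | 𝔄 n]) x) atTop (𝓝 (f x))) :
    ∀ A : Set X, MeasurableSet[𝔅] A → A ∈ AlgAE (mX := mX) μ 𝔄 := by
  intro A hA
  have hAm : MeasurableSet[mX] A := h𝔅 A hA
  refine ⟨hAm, unifCovered_aux (mX := mX) μ 𝔄 h𝔄 A hAm ?_, unifCovered_aux (mX := mX) μ 𝔄 h𝔄 Aᶜ hAm.compl ?_⟩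
  · exact h (indR A) (measurable_const.indicator hA) ⟨1, indR_abs_le_one A⟩
  · exact h (indR Aᶜ) (measurable_const.indicator hA.compl) ⟨1, indR_abs_le_one Aᶜ⟩
end
end
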